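/- arXiv:2405.18048 — 6 statements merged into one kernel-verified Lean document; each statement's English description precedes it below -/
import Mathlib

section
/- Inductive property of threshold windows: Let w : ℕ → ℝ be a sequence of payoffs, θ ∈ ℝ, and let i < j be natural numbers. If ∑_{t=i}^{k-1} w(t) < θ·(k-i) for every k with i < k < j, and ∑_{t=i}^{j-1} w(t) ≥ θ·(j-i), then for every k with i ≤ k < j it holds that ∑_{t=k}^{j-1} w(t) ≥ θ·(j-k). -/
theorem Finset.sub_le_sum_Ico_of_sum_Ico_le {M : Type*} [AddCommGroup M] [PartialOrder M]
    [IsOrderedAddMonoid M] (f : ℕ → M) {i k j : ℕ} (hik : i ≤ k) (hkj : k ≤ j) {a b : M}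
    (hprefix : ∑ t ∈ Finset.Ico i k, f t ≤ a) (hwhole : b ≤ ∑ t ∈ Finset.Ico i j, f t) :
    b - a ≤ ∑ t ∈ Finset.Ico k j, f t := by
  rw [← Finset.sum_Ico_consecutive f hik hkj] at hwhole
  rw [sub_le_iff_le_add']
  exact hwhole.trans (add_le_add_left hprefix _)

theorem inductive_property_of_windows_general (w : ℕ → ℝ) (θ : ℝ) (i j : ℕ)
    (hopen : ∀ k, i < k → k < j → ∑ t ∈ Finset.Ico i k, w t < θ * ((k : ℝ) - (i : ℝ)))
    (hclose : ∑ t ∈ Finset.Ico i j, w t ≥ θ * ((j : ℝ) - (i : ℝ))) :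
    ∀ k, i ≤ k → k < j → ∑ t ∈ Finset.Ico k j, w t ≥ θ * ((j : ℝ) - (k : ℝ)) := by
  intro k hik hkj
  rcases hik.eq_or_lt with rfl | hik
  · exact hclose
  · have h := Finset.sub_le_sum_Ico_of_sum_Ico_le w hik.le hkj.le (hopen k hik hkj).le hclose
    calc θ * ((j : ℝ) - k) = θ * ((j : ℝ) - i) - θ * ((k : ℝ) - i) := by ring
      _ ≤ ∑ t ∈ Finset.Ico k j, w t := h

/-- Inductive property of threshold windows: if the θ-window starting at `i`
closes at `j` (every proper initial segment from `i` has mean payoff `< θ`,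
while the segment from `i` to `j` has mean payoff `≥ θ`), then for every
`i ≤ k < j` the segment from `k` to `j` has mean payoff at least `θ`. -/
theorem inductive_property_of_windows (w : ℕ → ℝ) (θ : ℝ) (i j : ℕ) (hij : i < j)
    (hopen : ∀ k, i < k → k < j → ∑ t ∈ Finset.Ico i k, w t < θ * ((k : ℝ) - (i : ℝ)))
    (hclose : ∑ t ∈ Finset.Ico i j, w t ≥ θ * ((j : ℝ) - (i : ℝ))) :
    ∀ k, i ≤ k → k < j → ∑ t ∈ Finset.Ico k j, w t ≥ θ * ((j : ℝ) - (k : ℝ)) :=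
  inductive_property_of_windows_general w θ i j hopen hclose
end

section
/- Window-closing bound from a uniform segment lower bound: Let w : ℕ → ℝ and B ≤ 0 be such that ∑_{t=i}^{j-1} w(t) ≥ B for all natural numbers i ≤ j. Let ε < 0 be a real number and let n ≥ 1 be a natural number with (n : ℝ) ≥ B/ε. Then for every natural number i there exists j with i < j ≤ i + n such that ∑_{t=i}^{j-1} w(t) ≥ ε·(j-i). -/
theorem window_closing_bound_general (w : ℕ → ℝ) (B : ℝ)
    (hseg : ∀ i j : ℕ, i ≤ j → ∑ t ∈ Finset.Ico i j, w t ≥ B)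
    (ε : ℝ) (hε : ε < 0) (n : ℕ) (hn : 1 ≤ n) (hnB : (n : ℝ) ≥ B / ε) :
    ∀ i : ℕ, ∃ j : ℕ, i < j ∧ j ≤ i + n ∧
      ∑ t ∈ Finset.Ico i j, w t ≥ ε * ((j : ℝ) - (i : ℝ)) := by
  intro i
  have hlen : ((i + n : ℕ) : ℝ) - i = n := by push_cast; ring
  have hεn : ε * n ≤ B := by
    rw [mul_comm]
    exact (div_le_iff_of_neg hε).mp hnB
  refine ⟨i + n, by omega, le_rfl, ?_⟩
  rw [hlen]
  exact hεn.trans (hseg i (i + n) (by omega))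

/-- If every segment sum of `w` is bounded below by `B ≤ 0`, then for every
`ε < 0` and every `n ≥ 1` with `(n : ℝ) ≥ B / ε`, every `ε`-window closes
within `n` steps: from every position `i` there is `j` with `i < j ≤ i + n`
whose segment from `i` to `j` has mean payoff at least `ε`. -/
theorem window_closing_bound (w : ℕ → ℝ) (B : ℝ) (hB : B ≤ 0)
    (hseg : ∀ i j : ℕ, i ≤ j → ∑ t ∈ Finset.Ico i j, w t ≥ B)
    (ε : ℝ) (hε : ε < 0) (n : ℕ) (hn : 1 ≤ n) (hnB : (n : ℝ) ≥ B / ε) :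
    ∀ i : ℕ, ∃ j : ℕ, i < j ∧ j ≤ i + n ∧
      ∑ t ∈ Finset.Ico i j, w t ≥ ε * ((j : ℝ) - (i : ℝ)) :=
  window_closing_bound_general w B hseg ε hε n hn hnB
end

section
/- Walk-weight lower bound in graphs whose simple cycles are nonnegative: Let V be a finite type, E : V → V → Prop an edge relation, w : V → V → ℝ an edge-weight function, and m ≤ 0 a real number such that m ≤ w(u,v) whenever E u v. Suppose that every simple cycle has nonnegative total weight, i.e., for every list of vertices v₀, v₁, …, v_k with k ≥ 1, with E v_t v_{t+1} for all 0 ≤ t < k, with v₀, …, v_{k-1} pairwise distinct and v_k = v₀, one has ∑_{t=0}^{k-1} w(v_t, v_{t+1}) ≥ 0. Then every walk v₀, v₁, …, v_k (a list of vertices with E v_t v_{t+1} for all 0 ≤ t < k) satisfies ∑_{t=0}^{k-1} w(v_t, v_{t+1}) ≥ (card V)·m, where card V is the number of elements of V. -/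
/-!
Cut out the first simple cycle of a long walk: among `v 0, …, v (card V)` some vertex repeats,
and at the first repetition `v i = v j` the vertices `v i, …, v (j - 1)` are distinct. That cycle
has nonnegative weight, so removing it does not increase the weight, and the shorter walk is
bounded by induction. A walk with at most `card V` edges weighs at least `card V * m` edge by edge,
since `m ≤ 0`.
-/

open Finset

section Walks

variable {V : Type*}

def IsWalk (E : V → V → Prop) (v : ℕ → V) (k : ℕ) : Prop :=
  ∀ t, t < k → E (v t) (v (t + 1))

def walkWeight (w : V → V → ℝ) (v : ℕ → V) (k : ℕ) : ℝ :=
  ∑ t ∈ range k, w (v t) (v (t + 1))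

/-- The walk `u 0, …, u a` continued by `u' 1, u' 2, …`; a concatenation when `u a = u' 0`. -/
def walkAppend (u : ℕ → V) (a : ℕ) (u' : ℕ → V) : ℕ → V :=
  fun t => if t ≤ a then u t else u' (t - a)

def cutOut (v : ℕ → V) (i c : ℕ) : ℕ → V :=
  walkAppend v i fun t => v (i + c + t)

variable {E : V → V → Prop} {w : V → V → ℝ} {u u' v : ℕ → V}

theorem IsWalk.mono {a k : ℕ} (hv : IsWalk E v k) (h : a ≤ k) : IsWalk E v a :=
  fun t ht => hv t (by omega)

theorem IsWalk.drop {a b : ℕ} (hv : IsWalk E v (a + b)) : IsWalk E (fun t => v (a + t)) b :=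
  fun t ht => hv (a + t) (by omega)

theorem walkWeight_add (v : ℕ → V) (a b : ℕ) :
    walkWeight w v (a + b) = walkWeight w v a + walkWeight w (fun t => v (a + t)) b :=
  sum_range_add _ a b

theorem walkWeight_congr {k : ℕ} (h : ∀ t ≤ k, u t = v t) :
    walkWeight w u k = walkWeight w v k :=
  sum_congr rfl fun t ht => by
    rw [mem_range] at ht
    rw [h t ht.le, h (t + 1) ht]

theorem mul_le_walkWeight {m : ℝ} {k : ℕ} (hmw : ∀ x y, E x y → m ≤ w x y)
    (hv : IsWalk E v k) : k * m ≤ walkWeight w v k := by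
  simpa [walkWeight] using
    card_nsmul_le_sum (range k) _ m fun t ht => hmw _ _ (hv t (mem_range.mp ht))

theorem walkAppend_of_le {a t : ℕ} (h : t ≤ a) : walkAppend u a u' t = u t :=
  if_pos h

theorem walkAppend_add {a : ℕ} (h : u a = u' 0) (t : ℕ) : walkAppend u a u' (a + t) = u' t := by
  unfold walkAppend
  split_ifs with ht
  · obtain rfl : t = 0 := by omega
    simpa using h
  · simp

theorem walkWeight_walkAppend {a : ℕ} (h : u a = u' 0) (b : ℕ) :
    walkWeight w (walkAppend u a u') (a + b) = walkWeight w u a + walkWeight w u' b := by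
  rw [walkWeight_add, walkWeight_congr fun t ht => walkAppend_of_le ht]
  simp only [walkAppend_add h]

theorem IsWalk.walkAppend {a b : ℕ} (hu : IsWalk E u a) (hu' : IsWalk E u' b) (h : u a = u' 0) :
    IsWalk E (walkAppend u a u') (a + b) := by
  intro t ht
  rcases lt_or_ge t a with hta | hta
  · rw [walkAppend_of_le hta.le, walkAppend_of_le hta]
    exact hu t hta
  · obtain ⟨s, rfl⟩ := Nat.exists_eq_add_of_le hta
    rw [add_assoc, walkAppend_add h, walkAppend_add h]
    exact hu' s (by omega)

theorem IsWalk.cutOut {i c n : ℕ} (hv : IsWalk E v (i + c + n)) (h : v (i + c) = v i) :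
    IsWalk E (cutOut v i c) (i + n) :=
  (hv.mono (by omega)).walkAppend hv.drop h.symm

theorem walkWeight_eq_cutOut_add {i c n : ℕ} (h : v (i + c) = v i) :
    walkWeight w v (i + c + n) =
      walkWeight w (cutOut v i c) (i + n) + walkWeight w (fun t => v (i + t)) c := by
  rw [cutOut, walkWeight_walkAppend h.symm, walkWeight_add v (i + c) n, walkWeight_add v i c]
  ring

theorem exists_first_repeat [Finite V] (v : ℕ → V) :
    ∃ i j, i < j ∧ v i = v j ∧ Set.InjOn v (Set.Iio j) := by
  classical
  have hrep : ∃ j, ∃ i < j, v i = v j := by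
    obtain ⟨x, y, hxy, hv⟩ := Finite.exists_ne_map_eq_of_infinite v
    rcases hxy.lt_or_gt with h | h
    · exact ⟨y, x, h, hv⟩
    · exact ⟨x, y, h, hv.symm⟩
  obtain ⟨i, hij, hv⟩ := Nat.find_spec hrep
  refine ⟨i, Nat.find hrep, hij, hv, fun s hs t ht hst => ?_⟩
  by_contra hne
  rcases Ne.lt_or_gt hne with h | h
  · exact Nat.find_min hrep ht ⟨s, h, hst⟩
  · exact Nat.find_min hrep hs ⟨t, h, hst.symm⟩

theorem le_card_of_injOn_Iio [Fintype V] {j : ℕ} (h : Set.InjOn v (Set.Iio j)) :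
    j ≤ Fintype.card V := by
  simpa using card_le_card_of_injOn (s := range j) v (fun _ _ => mem_univ _) (by rwa [coe_range])

end Walks

/-- In a finite directed graph in which every edge weight is at least `m ≤ 0`
and every simple cycle has nonnegative total weight, every walk has total
weight at least `(card V) * m`. -/
theorem walk_weight_lower_bound {V : Type*} [Fintype V]
    (E : V → V → Prop) (w : V → V → ℝ) (m : ℝ) (hm : m ≤ 0)
    (hmw : ∀ u v : V, E u v → m ≤ w u v)
    (hcyc : ∀ (v : ℕ → V) (k : ℕ), 1 ≤ k →
      (∀ t, t < k → E (v t) (v (t + 1))) →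
      (∀ s t, s < k → t < k → v s = v t → s = t) →
      v k = v 0 →
      (0 : ℝ) ≤ ∑ t ∈ Finset.range k, w (v t) (v (t + 1))) :
    ∀ (v : ℕ → V) (k : ℕ), (∀ t, t < k → E (v t) (v (t + 1))) →
      (Fintype.card V : ℝ) * m ≤ ∑ t ∈ Finset.range k, w (v t) (v (t + 1)) := by
  rintro v k (hv : IsWalk E v k)
  induction k using Nat.strong_induction_on generalizing v with
  | _ k ih =>
  obtain ⟨i, j, hij, hvij, hinj⟩ := exists_first_repeat v
  rcases lt_or_ge k j with hkj | hjk
  · have hk : (k : ℝ) ≤ Fintype.card V := by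
      exact_mod_cast (hkj.trans_le (le_card_of_injOn_Iio hinj)).le
    calc (Fintype.card V : ℝ) * m ≤ k * m := mul_le_mul_of_nonpos_right hk hm
      _ ≤ walkWeight w v k := mul_le_walkWeight hmw hv
  · obtain ⟨c, rfl⟩ := Nat.exists_eq_add_of_le hij.le
    obtain ⟨n, rfl⟩ := Nat.exists_eq_add_of_le hjk
    have hcycle : 0 ≤ walkWeight w (fun t => v (i + t)) c :=
      hcyc _ c (by omega) (IsWalk.drop (hv.mono (by omega)))
        (fun s t hs ht hst => by
          simpa using hinj (Set.mem_Iio.mpr (by omega)) (Set.mem_Iio.mpr (by omega)) hst)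
        hvij.symm
    calc (Fintype.card V : ℝ) * m ≤ walkWeight w (cutOut v i c) (i + n) :=
          ih (i + n) (by omega) _ (hv.cutOut hvij.symm)
      _ ≤ walkWeight w v (i + c + n) := by rw [walkWeight_eq_cutOut_add hvij.symm]; linarith
end

section
/- Leakage of structured substochastic matrices: Let m ≥ 1 and let Q be an m×m real matrix (indexed by Fin m) and 0 < δ ≤ 1 such that: (i) all entries of Q are nonnegative; (ii) every nonzero entry of Q is at least δ; (iii) for every row i, either ∑_j Q(i,j) = 1 or ∑_j Q(i,j) ≤ 1 - δ; and (iv) for every row i, either ∑_j Q(i,j) ≤ 1 - δ or there exists j < i with Q(i,j) > 0. Then every row sum of the m-th power Q^m satisfies ∑_j (Q^m)(i,j) ≤ 1 - δ^m. -/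
/-! Write `r_n(i) = ∑ j, (Q ^ n) i j`, so that `r_{n+1}(i) = ∑ k, Q i k * r_n(k)` and `r_n ≤ 1`.
By induction on `n`, `r_n(i) ≤ 1 - δ ^ n` for every state of index `i < n`: a leaking row loses
`δ` at the first step, and any other row sends mass at least `δ` to a state `j < i`, which by
induction loses `δ ^ n` in the remaining `n` steps. Taking `n = m` covers every state. -/

open Finset

theorem sum_mul_le_sum_sub_mul {ι R : Type*} [CommRing R] [LinearOrder R] [IsStrictOrderedRing R]
    {s : Finset ι} {w v : ι → R} (hw : ∀ k ∈ s, 0 ≤ w k) (hv : ∀ k ∈ s, v k ≤ 1)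
    {j : ι} (hj : j ∈ s) :
    ∑ k ∈ s, w k * v k ≤ ∑ k ∈ s, w k - w j * (1 - v j) := by
  have hloss : w j * (1 - v j) ≤ ∑ k ∈ s, w k * (1 - v k) :=
    single_le_sum (f := fun k => w k * (1 - v k))
      (fun k hk => mul_nonneg (hw k hk) (sub_nonneg.2 (hv k hk))) hj
  simp only [mul_sub, mul_one, sum_sub_distrib] at hloss
  linarith

namespace Matrix

variable {ι : Type*} [Fintype ι] [DecidableEq ι]

theorem sum_pow_succ_apply {R : Type*} [Semiring R] (Q : Matrix ι ι R) (n : ℕ) (i : ι) :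
    ∑ j, (Q ^ (n + 1)) i j = ∑ k, Q i k * ∑ j, (Q ^ n) k j := by
  simp only [pow_succ', mul_apply, mul_sum]
  exact sum_comm

variable {R : Type*} [CommRing R] [LinearOrder R] [IsStrictOrderedRing R] {Q : Matrix ι ι R}

theorem sum_pow_apply_le_one (hQ : ∀ i j, 0 ≤ Q i j) (hrow : ∀ i, ∑ j, Q i j ≤ 1)
    (n : ℕ) (i : ι) : ∑ j, (Q ^ n) i j ≤ 1 := by
  induction n generalizing i with
  | zero => simp [one_apply]
  | succ n ih =>
    rw [sum_pow_succ_apply]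
    calc ∑ k, Q i k * ∑ j, (Q ^ n) k j ≤ ∑ k, Q i k :=
          sum_le_sum fun k _ => mul_le_of_le_one_right (hQ i k) (ih k)
      _ ≤ 1 := hrow i

theorem sum_pow_apply_le_one_sub_pow {δ : R} (hδ0 : 0 ≤ δ) (hδ1 : δ ≤ 1)
    (hQ : ∀ i j, 0 ≤ Q i j) (hrow : ∀ i, ∑ j, Q i j ≤ 1) (r : ι → ℕ)
    (hdown : ∀ i, (∑ j, Q i j ≤ 1 - δ) ∨ ∃ j, r j < r i ∧ δ ≤ Q i j)
    (n : ℕ) (i : ι) (hi : r i < n) : ∑ j, (Q ^ n) i j ≤ 1 - δ ^ n := by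
  induction n generalizing i with
  | zero => exact absurd hi (Nat.not_lt_zero _)
  | succ n ih =>
    rw [sum_pow_succ_apply]
    have hv := sum_pow_apply_le_one hQ hrow n
    rcases hdown i with hleak | ⟨j, hji, hδj⟩
    · calc ∑ k, Q i k * ∑ l, (Q ^ n) k l ≤ ∑ k, Q i k :=
            sum_le_sum fun k _ => mul_le_of_le_one_right (hQ i k) (hv k)
        _ ≤ 1 - δ := hleak
        _ ≤ 1 - δ ^ (n + 1) := sub_le_sub_left (pow_le_of_le_one hδ0 hδ1 n.succ_ne_zero) 1
    · have hj : ∑ l, (Q ^ n) j l ≤ 1 - δ ^ n := ih j (by omega)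
      have hloss : δ * δ ^ n ≤ Q i j * (1 - ∑ l, (Q ^ n) j l) :=
        mul_le_mul hδj (by linarith) (pow_nonneg hδ0 n) (hQ i j)
      calc ∑ k, Q i k * ∑ l, (Q ^ n) k l ≤ ∑ k, Q i k - Q i j * (1 - ∑ l, (Q ^ n) j l) :=
            sum_mul_le_sum_sub_mul (fun k _ => hQ i k) (fun k _ => hv k) (mem_univ j)
        _ ≤ 1 - δ * δ ^ n := by linarith [hrow i]
        _ = 1 - δ ^ (n + 1) := by rw [pow_succ']

end Matrix

theorem substochastic_leakage_general (m : ℕ)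
    (Q : Matrix (Fin m) (Fin m) ℝ) (δ : ℝ) (hδ0 : 0 < δ) (hδ1 : δ ≤ 1)
    (hnonneg : ∀ i j, 0 ≤ Q i j)
    (hmin : ∀ i j, Q i j ≠ 0 → δ ≤ Q i j)
    (hrow : ∀ i, (∑ j, Q i j = 1) ∨ (∑ j, Q i j ≤ 1 - δ))
    (hdown : ∀ i, (∑ j, Q i j ≤ 1 - δ) ∨ (∃ j, j < i ∧ 0 < Q i j)) :
    ∀ i, ∑ j, (Q ^ m) i j ≤ 1 - δ ^ m := by
  have hrow_le_one : ∀ i, ∑ j, Q i j ≤ 1 := fun i =>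
    (hrow i).elim le_of_eq fun h => h.trans (by linarith)
  have hdown_val : ∀ i, (∑ j, Q i j ≤ 1 - δ) ∨ ∃ j : Fin m, (j : ℕ) < i ∧ δ ≤ Q i j := fun i =>
    (hdown i).imp_right fun ⟨j, hji, hQij⟩ => ⟨j, hji, hmin i j hQij.ne'⟩
  exact fun i => Matrix.sum_pow_apply_le_one_sub_pow hδ0.le hδ1 hnonneg hrow_le_one Fin.val
    hdown_val m i i.isLt

/-- Leakage of structured substochastic matrices: if `Q` has nonnegative
entries, every nonzero entry is at least `δ`, every row either sums to `1` or
sums to at most `1 - δ`, and every row either leaks (sums to at most `1 - δ`)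
or has a positive entry in a column of strictly smaller index, then every row
sum of `Q ^ m` is at most `1 - δ ^ m`. -/
theorem substochastic_leakage (m : ℕ) (hm : 1 ≤ m)
    (Q : Matrix (Fin m) (Fin m) ℝ) (δ : ℝ) (hδ0 : 0 < δ) (hδ1 : δ ≤ 1)
    (hnonneg : ∀ i j, 0 ≤ Q i j)
    (hmin : ∀ i j, Q i j ≠ 0 → δ ≤ Q i j)
    (hrow : ∀ i, (∑ j, Q i j = 1) ∨ (∑ j, Q i j ≤ 1 - δ))
    (hdown : ∀ i, (∑ j, Q i j ≤ 1 - δ) ∨ (∃ j, j < i ∧ 0 < Q i j)) :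
    ∀ i, ∑ j, (Q ^ m) i j ≤ 1 - δ ^ m :=
  substochastic_leakage_general m Q δ hδ0 hδ1 hnonneg hmin hrow hdown
end

section
/- Invertibility for structured substochastic matrices (matrix form of the paper's Proposition that I - Q_B is invertible): Let m ≥ 1 and let Q be an m×m real matrix (indexed by Fin m) and 0 < δ ≤ 1 such that: (i) all entries of Q are nonnegative; (ii) every nonzero entry of Q is at least δ; (iii) for every row i, either ∑_j Q(i,j) = 1 or ∑_j Q(i,j) ≤ 1 - δ; and (iv) for every row i, either ∑_j Q(i,j) ≤ 1 - δ or there exists j < i with Q(i,j) > 0. Then det(I - Q) ≠ 0, i.e., I - Q is invertible. -/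
/-!
If `(1 - Q) v = 0` with `v ≠ 0`, look at the smallest index `i` at which `|v|` attains its
maximum `M > 0`. Since `v i = (Q v) i` is a subconvex combination of entries of modulus at most
`M`, equality `|v i| = M` is impossible when row `i` leaks (its sum is `< 1`), and also when it
puts positive weight on some `j < i`, where `|v j| < M` by minimality of `i`.
-/

open Finset

namespace Matrix

variable {ι R : Type*} [Fintype ι] [Field R] [LinearOrder R] [IsStrictOrderedRing R]

theorem abs_mulVec_apply_le_sum_mul_abs {Q : Matrix ι ι R} {i : ι} (hQ : ∀ j, 0 ≤ Q i j)
    (v : ι → R) : |(Q *ᵥ v) i| ≤ ∑ j, Q i j * |v j| :=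
  calc |(Q *ᵥ v) i| = |∑ j, Q i j * v j| := rfl
    _ ≤ ∑ j, |Q i j * v j| := abs_sum_le_sum_abs _ _
    _ = ∑ j, Q i j * |v j| := by simp only [abs_mul, abs_of_nonneg (hQ _)]

theorem abs_mulVec_apply_lt {Q : Matrix ι ι R} {i : ι} {v : ι → R} {M : R}
    (hQ : ∀ j, 0 ≤ Q i j) (hrow : ∑ j, Q i j ≤ 1) (hM : ∀ j, |v j| ≤ M) (hM0 : 0 < M)
    (hstrict : ∑ j, Q i j < 1 ∨ ∃ j, 0 < Q i j ∧ |v j| < M) : |(Q *ᵥ v) i| < M := by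
  have hweight : ∀ j ∈ univ, Q i j * |v j| ≤ Q i j * M :=
    fun j _ => mul_le_mul_of_nonneg_left (hM j) (hQ j)
  refine (abs_mulVec_apply_le_sum_mul_abs hQ v).trans_lt ?_
  rw [← one_mul M]
  rcases hstrict with hleak | ⟨j, hQj, hvj⟩
  · calc ∑ j, Q i j * |v j| ≤ ∑ j, Q i j * M := sum_le_sum hweight
      _ = (∑ j, Q i j) * M := (sum_mul ..).symm
      _ < 1 * M := mul_lt_mul_of_pos_right hleak hM0
  · calc ∑ j, Q i j * |v j| < ∑ j, Q i j * M :=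
          sum_lt_sum hweight ⟨j, mem_univ j, mul_lt_mul_of_pos_left hvj hQj⟩
      _ = (∑ j, Q i j) * M := (sum_mul ..).symm
      _ ≤ 1 * M := mul_le_mul_of_nonneg_right hrow hM0.le

theorem eq_zero_of_mulVec_eq_self [LinearOrder ι] {Q : Matrix ι ι R}
    (hQ : ∀ i j, 0 ≤ Q i j) (hrow : ∀ i, ∑ j, Q i j ≤ 1)
    (hdown : ∀ i, ∑ j, Q i j < 1 ∨ ∃ j < i, 0 < Q i j) {v : ι → R} (hv : Q *ᵥ v = v) :
    v = 0 := by
  by_contra hv0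
  obtain ⟨k, hk⟩ := Function.ne_iff.mp hv0
  obtain ⟨imax, -, hmax⟩ := exists_max_image univ (fun j => |v j|) ⟨k, mem_univ k⟩
  set M := |v imax|
  have hM0 : 0 < M := (abs_pos.mpr hk).trans_le (hmax k (mem_univ k))
  have hargmax : (univ.filter fun j => |v j| = M).Nonempty := ⟨imax, mem_filter.mpr ⟨mem_univ _, rfl⟩⟩
  set i := (univ.filter fun j => |v j| = M).min' hargmax
  have hvi : |v i| = M := by simpa using min'_mem _ hargmax
  have hbelow : ∀ j < i, |v j| < M := fun j hj =>
    (hmax j (mem_univ j)).lt_of_ne fun h => (min'_le _ j (by simpa using h)).not_gt hj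
  refine (abs_mulVec_apply_lt (hQ i) (hrow i) (fun j => hmax j (mem_univ j)) hM0 ?_).ne
    (by rw [hv, hvi])
  exact (hdown i).imp_right fun ⟨j, hji, hQj⟩ => ⟨j, hQj, hbelow j hji⟩

end Matrix

theorem one_sub_substochastic_invertible_general (m : ℕ)
    (Q : Matrix (Fin m) (Fin m) ℝ) (δ : ℝ) (hδ0 : 0 < δ)
    (hnonneg : ∀ i j, 0 ≤ Q i j)
    (hrow : ∀ i, (∑ j, Q i j = 1) ∨ (∑ j, Q i j ≤ 1 - δ))
    (hdown : ∀ i, (∑ j, Q i j ≤ 1 - δ) ∨ (∃ j, j < i ∧ 0 < Q i j)) :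
    ((1 : Matrix (Fin m) (Fin m) ℝ) - Q).det ≠ 0 := by
  intro hdet
  obtain ⟨v, hv0, hv⟩ := Matrix.exists_mulVec_eq_zero_iff.mpr hdet
  rw [Matrix.sub_mulVec, Matrix.one_mulVec, sub_eq_zero] at hv
  refine hv0 (Matrix.eq_zero_of_mulVec_eq_self hnonneg (fun i => ?_) (fun i => ?_) hv.symm)
  · rcases hrow i with h | h <;> linarith
  · exact (hdown i).imp_left fun h => by linarith

/-- Invertibility for structured substochastic matrices: if `Q` has nonnegative
entries, every nonzero entry at least `δ`, every row sums to `1` or to at most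
`1 - δ`, and every row either leaks or has a positive entry in a column of
strictly smaller index, then `I - Q` is invertible, i.e., `det (1 - Q) ≠ 0`. -/
theorem one_sub_substochastic_invertible (m : ℕ) (hm : 1 ≤ m)
    (Q : Matrix (Fin m) (Fin m) ℝ) (δ : ℝ) (hδ0 : 0 < δ) (hδ1 : δ ≤ 1)
    (hnonneg : ∀ i j, 0 ≤ Q i j)
    (hmin : ∀ i j, Q i j ≠ 0 → δ ≤ Q i j)
    (hrow : ∀ i, (∑ j, Q i j = 1) ∨ (∑ j, Q i j ≤ 1 - δ))
    (hdown : ∀ i, (∑ j, Q i j ≤ 1 - δ) ∨ (∃ j, j < i ∧ 0 < Q i j)) :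
    ((1 : Matrix (Fin m) (Fin m) ℝ) - Q).det ≠ 0 :=
  one_sub_substochastic_invertible_general m Q δ hδ0 hnonneg hrow hdown
end

section
/- The fixed window mean-payoff value of a finitely-valued payoff sequence is attained: Let ℓ ≥ 1 be a natural number and let w : ℕ → ℝ be a sequence whose range is a finite set. Define S = {θ ∈ ℝ | ∃ N, ∀ i ≥ N, ∃ j with 1 ≤ j ≤ ℓ and ∑_{t=i}^{i+j-1} w(t) ≥ θ·j}. Then S is nonempty, bounded above, and its supremum belongs to S (i.e., S has a maximum element). -/
/-! The best mean over the windows starting at `i`, `a i := max_{1 ≤ j ≤ ℓ} mean(i, j)`, takes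
only finitely many values, and `θ ∈ S` iff eventually `θ ≤ a i`. For a finitely-valued
sequence the values taken infinitely often are eventually the only ones taken, so their
minimum is the largest eventual lower bound, and it is attained. -/

open Filter Finset

theorem exists_isGreatest_eventually_le_of_finite_range {ι α : Type*} [LinearOrder α]
    {l : Filter ι} [l.NeBot] {a : ι → α} (ha : (Set.range a).Finite) :
    ∃ m, IsGreatest {θ | ∀ᶠ i in l, θ ≤ a i} m := by
  set F := {v ∈ Set.range a | ∃ᶠ i in l, a i = v}
  have hF : ∀ᶠ i in l, a i ∈ F := by
    have hrare : ∀ v ∈ {v ∈ Set.range a | ¬∃ᶠ i in l, a i = v}, ∀ᶠ i in l, a i ≠ v :=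
      fun v hv => not_frequently.mp hv.2
    filter_upwards [(ha.subset (Set.sep_subset _ _)).eventually_all.mpr hrare] with i hi
    exact ⟨⟨i, rfl⟩, by_contra fun h => hi (a i) ⟨⟨i, rfl⟩, h⟩ rfl⟩
  obtain ⟨m, hmF, hmin⟩ := F.exists_min_image id (ha.subset (Set.sep_subset _ _))
    (hF.exists.elim fun i hi => ⟨a i, hi⟩)
  refine ⟨m, ?_, fun θ hθ => ?_⟩
  · filter_upwards [hF] with i hi using hmin (a i) hi
  · obtain ⟨i, hθi, hi⟩ := (hθ.and_frequently hmF.2).exists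
    exact hi ▸ hθi

noncomputable def windowMean (w : ℕ → ℝ) (i j : ℕ) : ℝ :=
  (∑ k ∈ range j, w (i + k)) / j

noncomputable def maxWindowMean (w : ℕ → ℝ) {ℓ : ℕ} (hℓ : 1 ≤ ℓ) (i : ℕ) : ℝ :=
  (Icc 1 ℓ).sup' (nonempty_Icc.mpr hℓ) (windowMean w i)

section

variable {w : ℕ → ℝ} {ℓ : ℕ}

theorem le_maxWindowMean_iff (hℓ : 1 ≤ ℓ) {θ : ℝ} {i : ℕ} :
    θ ≤ maxWindowMean w hℓ i ↔
      ∃ j : ℕ, 1 ≤ j ∧ j ≤ ℓ ∧ ∑ t ∈ Ico i (i + j), w t ≥ θ * (j : ℝ) := by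
  simp only [maxWindowMean, le_sup'_iff, mem_Icc, and_assoc]
  refine exists_congr fun j => and_congr_right fun hj => and_congr_right fun _ => ?_
  rw [windowMean, le_div_iff₀ (by exact_mod_cast hj), sum_Ico_eq_sum_range,
    add_tsub_cancel_left, ge_iff_le]

theorem finite_range_windowMean (hfin : (Set.range w).Finite) (j : ℕ) :
    (Set.range fun i => windowMean w i j).Finite := by
  refine ((Set.Finite.pi fun _ : Fin j => hfin).image fun v => (∑ k, v k) / (j : ℝ)).subset ?_
  rintro _ ⟨i, rfl⟩
  exact ⟨fun k => w (i + k), fun k _ => ⟨_, rfl⟩, by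
    simp only [windowMean, Fin.sum_univ_eq_sum_range (fun k => w (i + k))]⟩

theorem finite_range_maxWindowMean (hℓ : 1 ≤ ℓ) (hfin : (Set.range w).Finite) :
    (Set.range (maxWindowMean w hℓ)).Finite := by
  refine ((finite_toSet (Icc 1 ℓ)).biUnion fun j _ => finite_range_windowMean hfin j).subset ?_
  rintro _ ⟨i, rfl⟩
  obtain ⟨j, hj, hmax⟩ := exists_mem_eq_sup' (nonempty_Icc.mpr hℓ) (windowMean w i)
  exact Set.mem_biUnion hj ⟨i, hmax.symm⟩

end

/-- The fixed window mean-payoff value of a finitely-valued payoff sequence is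
attained: for a payoff sequence `w` with finite range and window length
`ℓ ≥ 1`, the set `S` of thresholds `θ` such that eventually every position
starts a segment of length at most `ℓ` with mean payoff at least `θ` is
nonempty, bounded above, and contains its supremum. -/
theorem fwmp_value_attained (ℓ : ℕ) (hℓ : 1 ≤ ℓ) (w : ℕ → ℝ)
    (hfin : (Set.range w).Finite) :
    let S : Set ℝ := {θ : ℝ | ∃ N : ℕ, ∀ i ≥ N, ∃ j : ℕ, 1 ≤ j ∧ j ≤ ℓ ∧
      ∑ t ∈ Finset.Ico i (i + j), w t ≥ θ * (j : ℝ)}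
    S.Nonempty ∧ BddAbove S ∧ sSup S ∈ S := by
  intro S
  have hS : S = {θ | ∀ᶠ i in atTop, θ ≤ maxWindowMean w hℓ i} := by
    ext θ
    simp only [S, Set.mem_ofPred_eq, eventually_atTop, le_maxWindowMean_iff]
  obtain ⟨m, hm⟩ := exists_isGreatest_eventually_le_of_finite_range (l := atTop)
    (finite_range_maxWindowMean hℓ hfin)
  rw [hS, hm.csSup_eq]
  exact ⟨⟨m, hm.1⟩, ⟨m, hm.2⟩, hm.1⟩
end
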